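/- (Moment matching by multipole fields.) Suppose the lattice operator H is stable and admits a lattice Green's function 𝒢. Let p ≥ 1, α ∈ ℕ₀, c > 0, let u ∈ 𝓗¹ satisfy |H[u](ℓ)| ≤ c⟨ℓ⟩^{−d−p}(log⟨ℓ⟩)^α for all ℓ (so the moments 𝓘_j[u] converge absolutely for j = 0,…,p−1), and let 𝒮 ⊂ Λ be a lattice basis. Then there exist unique symmetric arrays b^{(i,k)} ∈ (ℝ^𝒮)^{⊙i}, for i = 0,…,p−1 and k = 1,…,N, such that the function v_b := ∑_{i=0}^{p−1}∑_{k=1}^{N} b^{(i,k)} : D_𝒮^i 𝒢_k — whose linearized force field H[v_b] has compact support, so that all its moments are defined — satisfies 𝓘_j[v_b] = 𝓘_j[u] for all j = 0,…,p−1. -/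

import Mathlib

noncomputable section

open scoped BigOperators
open MeasureTheory Filter Topology

namespace Defect

abbrev Vec (n : ℕ) : Type := Fin n → ℝ

/-- Euclidean norm of a vector in `ℝ^n`. -/
def enorm {n : ℕ} (v : Vec n) : ℝ := Real.sqrt (∑ i, (v i) ^ 2)

/-- `⟨x⟩ := |x| + 2`. -/
def ang {n : ℕ} (v : Vec n) : ℝ := enorm v + 2

def dotV {n : ℕ} (x y : Vec n) : ℝ := ∑ i, x i * y i

/-- Matrix-vector product for a plain `Fin N → Fin N → ℝ` matrix. -/
def mulV {N : ℕ} (M : Fin N → Fin N → ℝ) (v : Vec N) : Vec N := fun i => ∑ j, M i j * v j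

/-- Euclidean (Frobenius) norm of an `N × N` array. -/
def mnorm {N : ℕ} (M : Fin N → Fin N → ℝ) : ℝ := Real.sqrt (∑ i, ∑ j, (M i j) ^ 2)

/-- The lattice point `A z` for `z ∈ ℤ^d`. -/
def latticePt (d : ℕ) (A : Matrix (Fin d) (Fin d) ℝ) (z : Fin d → ℤ) : Vec d :=
  fun i => ∑ j, A i j * (z j : ℝ)

/-- The Bravais lattice `Λ = A ℤ^d`. -/
def Lattice (d : ℕ) (A : Matrix (Fin d) (Fin d) ℝ) : Set (Vec d) :=
  Set.range (latticePt d A)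

/-- First-order finite difference `D_ρ u (ℓ) = u(ℓ+ρ) - u(ℓ)`. -/
def D1 {d : ℕ} {M : Type} [AddCommGroup M] (ρ : Vec d) (u : Vec d → M) (ℓ : Vec d) : M :=
  u (ℓ + ρ) - u ℓ

/-- Iterated finite difference `D_{ρ₁} ⋯ D_{ρ_j} u (ℓ)` (closed form). -/
def Dmulti {d : ℕ} {M : Type} [AddCommGroup M] [Module ℝ M] {j : ℕ}
    (ρs : Fin j → Vec d) (u : Vec d → M) (ℓ : Vec d) : M :=
  ∑ S : Finset (Fin j), ((-1 : ℝ) ^ (j - S.card)) • u (ℓ + ∑ i ∈ S, ρs i)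

/-- `|Du(ℓ)|²`, the squared Euclidean norm of the stencil of first differences. -/
def Dnorm1Sq {d N : ℕ} (R : Finset (Vec d)) (u : Vec d → Vec N) (ℓ : Vec d) : ℝ :=
  ∑ ρ ∈ R, (enorm (D1 ρ u ℓ)) ^ 2

/-- `|D^j u(ℓ)|`, the Euclidean norm of the array `(D_{ρ⃗} u(ℓ))_{ρ⃗ ∈ R^j}`. -/
def DnormJ {d N : ℕ} (R : Finset (Vec d)) (j : ℕ) (u : Vec d → Vec N) (ℓ : Vec d) : ℝ :=
  Real.sqrt (∑ ρs : Fin j → {x // x ∈ R},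
    (enorm (Dmulti (fun i => (ρs i : Vec d)) u ℓ)) ^ 2)

/-- The linearized lattice operator
`H[u](ℓ) = ∑_{σ,ρ∈R} (C_{σρ} D_ρ u(ℓ-σ) - C_{σρ} D_ρ u(ℓ))`. -/
def Hop (d N : ℕ) (R : Finset (Vec d)) (C : Vec d → Vec d → Fin N → Fin N → ℝ)
    (u : Vec d → Vec N) (ℓ : Vec d) : Vec N :=
  ∑ σ ∈ R, ∑ ρ ∈ R, (mulV (C σ ρ) (D1 ρ u (ℓ - σ)) - mulV (C σ ρ) (D1 ρ u ℓ))

/-- `u ∈ 𝓗¹`. -/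
def InH1 {d N : ℕ} (A : Matrix (Fin d) (Fin d) ℝ) (R : Finset (Vec d))
    (u : Vec d → Vec N) : Prop :=
  Summable fun z : Fin d → ℤ => Dnorm1Sq R u (latticePt d A z)

/-- `u ∈ 𝓗ᶜ` : the stencil `Du` has bounded support on the lattice. -/
def InHc {d N : ℕ} (A : Matrix (Fin d) (Fin d) ℝ) (R : Finset (Vec d))
    (u : Vec d → Vec N) : Prop :=
  ∃ rad : ℝ, ∀ z : Fin d → ℤ, rad ≤ enorm (latticePt d A z) →
    ∀ ρ ∈ R, D1 ρ u (latticePt d A z) = 0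

/-- Stability of the lattice operator `H`. -/
def IsStable (d N : ℕ) (A : Matrix (Fin d) (Fin d) ℝ) (R : Finset (Vec d))
    (C : Vec d → Vec d → Fin N → Fin N → ℝ) : Prop :=
  ∃ c₀ : ℝ, 0 < c₀ ∧ ∀ u : Vec d → Vec N, InHc A R u →
    c₀ * (∑' z : Fin d → ℤ, Dnorm1Sq R u (latticePt d A z)) ≤
      ∑' z : Fin d → ℤ, ∑ σ ∈ R, ∑ ρ ∈ R,
        dotV (D1 σ u (latticePt d A z)) (mulV (C σ ρ) (D1 ρ u (latticePt d A z)))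

/-- `k`-th column of a matrix-valued function. -/
def col {d N : ℕ} (G : Vec d → Fin N → Fin N → ℝ) (k : Fin N) : Vec d → Vec N :=
  fun x i => G x i k

/-- `|D^j 𝒢(ℓ)|` for matrix-valued `𝒢`. -/
def DnormJmat {d N : ℕ} (R : Finset (Vec d)) (j : ℕ)
    (G : Vec d → Fin N → Fin N → ℝ) (ℓ : Vec d) : ℝ :=
  Real.sqrt (∑ k : Fin N, (DnormJ R j (col G k) ℓ) ^ 2)

/-- `𝒢` is a lattice Green's function for `H`. -/
def IsLatticeGreen (d N : ℕ) (A : Matrix (Fin d) (Fin d) ℝ) (R : Finset (Vec d))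
    (C : Vec d → Vec d → Fin N → Fin N → ℝ) (G : Vec d → Fin N → Fin N → ℝ) : Prop :=
  (∀ (k : Fin N) (z : Fin d → ℤ),
      Hop d N R C (col G k) (latticePt d A z) =
        if latticePt d A z = 0 then Pi.single k 1 else 0) ∧
  (∀ j : ℕ, 1 ≤ j → ∃ cj : ℝ, ∀ z : Fin d → ℤ,
      DnormJmat R j G (latticePt d A z) ≤
        cj * ang (latticePt d A z) ^ ((2 : ℝ) - d - j))

/-- A symmetric array `b ∈ (ℝ^{Fin d})^{⊙ i}`. -/
def SymArr {d i : ℕ} (b : (Fin i → Fin d) → ℝ) : Prop :=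
  ∀ (π : Equiv.Perm (Fin i)) (σv : Fin i → Fin d), b (σv ∘ π) = b σv

/-- `b : D_𝒮^i f`, a multipole term built from the basis `s`. -/
def multipole (d N : ℕ) (s : Fin d → Vec d) (i : ℕ) (b : (Fin i → Fin d) → ℝ)
    (f : Vec d → Vec N) : Vec d → Vec N :=
  fun ℓ => ∑ σv : Fin i → Fin d, b σv • Dmulti (fun m => s (σv m)) f ℓ

/-- Iterated partial derivative `∂_{j₁} ⋯ ∂_{j_i} f (x)`. -/
def pderivMulti {d : ℕ} (i : ℕ) (js : Fin i → Fin d) (f : Vec d → ℝ) (x : Vec d) : ℝ :=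
  iteratedFDeriv ℝ i f x (fun m => Pi.single (js m) (1 : ℝ))

/-- `a : ∇^i f (x)` for a tensor `a ∈ (ℝ^d)^{⊗ i}`. -/
def aContract {d : ℕ} (i : ℕ) (a : (Fin i → Fin d) → ℝ) (f : Vec d → ℝ) (x : Vec d) : ℝ :=
  ∑ js : Fin i → Fin d, a js * pderivMulti i js f x

/-- Elementary tensor `σ⃗^⊗` as an array. -/
def tensorPow {d k : ℕ} (σs : Fin k → Vec d) : (Fin k → Fin d) → ℝ :=
  fun js => ∏ m, σs m (js m)

/-- Symmetric tensor product `σ⃗^⊙`. -/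
def symTensor {d k : ℕ} (σs : Fin k → Vec d) : (Fin k → Fin d) → ℝ :=
  fun js => ((k.factorial : ℝ))⁻¹ * ∑ π : Equiv.Perm (Fin k), tensorPow (σs ∘ π) js

/-- A symmetric tensor (array invariant under index permutations). -/
def SymTensor {d k : ℕ} (T : (Fin k → Fin d) → ℝ) : Prop :=
  ∀ (π : Equiv.Perm (Fin k)) (js : Fin k → Fin d), T (js ∘ π) = T js

/-- `∂V/∂g_ρ (gs)` as a vector in `ℝ^N`. -/
def gradV {d N : ℕ} (R : Finset (Vec d)) (V : ({x // x ∈ R} → Vec N) → ℝ)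
    (ρ : {x // x ∈ R}) (gs : {x // x ∈ R} → Vec N) : Vec N :=
  fun i => fderiv ℝ V gs (Pi.single ρ (Pi.single i 1))

/-- The finite-difference stencil `Du(ℓ) = (D_ρ u(ℓ))_{ρ ∈ R}`. -/
def Dstencil {d N : ℕ} (R : Finset (Vec d)) (u : Vec d → Vec N) (ℓ : Vec d) :
    {x // x ∈ R} → Vec N :=
  fun ρ => D1 (ρ : Vec d) u ℓ

/-- `C_{σρ} = ∂²V/∂g_σ ∂g_ρ (0)`. -/
def CofV {d N : ℕ} (R : Finset (Vec d)) (V : ({x // x ∈ R} → Vec N) → ℝ)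
    (σ ρ : Vec d) (i j : Fin N) : ℝ :=
  if hσ : σ ∈ R then
    if hρ : ρ ∈ R then
      iteratedFDeriv ℝ 2 V 0
        ![Pi.single ⟨σ, hσ⟩ (Pi.single i 1), Pi.single ⟨ρ, hρ⟩ (Pi.single j 1)]
    else 0
  else 0

/-- Summand of the first variation `δE(u)[v]` at a site. -/
def deltaEsite {d N : ℕ} (R : Finset (Vec d)) (V : ({x // x ∈ R} → Vec N) → ℝ)
    (u v : Vec d → Vec N) (ℓ : Vec d) : ℝ :=
  ∑ ρ ∈ R.attach, dotV (gradV R V ρ (Dstencil R u ℓ)) (D1 (ρ : Vec d) v ℓ)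

/-- The pointwise atomistic force `δE(u)(ℓ)`. -/
def deltaEpt {d N : ℕ} (R : Finset (Vec d)) (V : ({x // x ∈ R} → Vec N) → ℝ)
    (u : Vec d → Vec N) (ℓ : Vec d) : Vec N :=
  ∑ ρ ∈ R.attach,
    (gradV R V ρ (Dstencil R u (ℓ - (ρ : Vec d))) - gradV R V ρ (Dstencil R u ℓ))

/-- Point symmetry of the site potential. -/
def PointSym {d N : ℕ} (R : Finset (Vec d)) (hRsym : ∀ ρ ∈ R, -ρ ∈ R)
    (V : ({x // x ∈ R} → Vec N) → ℝ) : Prop :=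
  ∀ gs : {x // x ∈ R} → Vec N,
    V (fun ρ => -(gs ⟨-(ρ : Vec d), hRsym _ ρ.2⟩)) = V gs

/-- The Cauchy–Born elasticity tensor `ℂ_{iajb}`. -/
def CB {d N : ℕ} (A : Matrix (Fin d) (Fin d) ℝ) (R : Finset (Vec d))
    (C : Vec d → Vec d → Fin N → Fin N → ℝ)
    (i : Fin N) (a : Fin d) (j : Fin N) (b : Fin d) : ℝ :=
  (|A.det|)⁻¹ * ∑ ρ ∈ R, ∑ σ ∈ R, C ρ σ i j * ρ a * σ b


/-!
`H` is linear and commutes with lattice translations, hence with finite differences, so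
`H[v_b] = ∑ b^{(i,k)} : D_𝒮^i H[𝒢_k]` is a finite combination of shifted lattice deltas.
It therefore has compact support, and its `j`-th moment is a finite sum: the moment of
`b : D_𝒮^i δ_k` is the `i`-fold difference along `𝒮` of the monomial `x ↦ (-x)^{⊗j}` at `0`.
By inclusion–exclusion this difference vanishes for `j < i`, and for `j = i` it is `(-1)^j j!`
times the `j`-th Kronecker power of the basis matrix applied to `b`. On symmetric arrays the
moment map is thus block triangular with invertible diagonal blocks, hence injective, hence
bijective, since it maps the finite-dimensional space of symmetric families into itself.
The moments of `u` converge absolutely because `|H[u](ℓ)| |ℓ|^j ≲ ⟨ℓ⟩^{-d-1/2}` for `j < p`,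
which is summable over the lattice.
-/

lemma log_pow_le_mul_rpow_half (α : ℕ) {x : ℝ} (hx : 1 ≤ x) :
    Real.log x ^ α ≤ (2 * α) ^ α * x ^ (1 / 2 : ℝ) := by
  have hx0 : 0 < x := by linarith
  rcases Nat.eq_zero_or_pos α with rfl | hα
  · simpa using Real.one_le_rpow hx (by norm_num)
  have hα' : (0 : ℝ) < α := by exact_mod_cast hα
  have hlog : Real.log x ≤ 2 * α * x ^ (1 / (2 * α) : ℝ) := by
    have := Real.log_le_rpow_div hx0.le (by positivity : (0 : ℝ) < 1 / (2 * α))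
    rwa [div_div_eq_mul_div, div_one, mul_comm] at this
  calc Real.log x ^ α ≤ (2 * α * x ^ (1 / (2 * α) : ℝ)) ^ α :=
        pow_le_pow_left₀ (Real.log_nonneg hx) hlog α
    _ = (2 * α) ^ α * x ^ (1 / 2 : ℝ) := by
        rw [mul_pow, ← Real.rpow_natCast (x ^ _), ← Real.rpow_mul hx0.le]
        congr 2
        field_simp

section Lattice

variable {d : ℕ} {A : Matrix (Fin d) (Fin d) ℝ}

lemma abs_apply_le_enorm (v : Vec d) (i : Fin d) : |v i| ≤ enorm v := by
  rw [enorm, ← Real.sqrt_sq_eq_abs]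
  exact Real.sqrt_le_sqrt (Finset.single_le_sum (fun j _ => sq_nonneg (v j)) (Finset.mem_univ i))

lemma norm_le_enorm (v : Vec d) : ‖v‖ ≤ enorm v :=
  (pi_norm_le_iff_of_nonneg (Real.sqrt_nonneg _)).mpr fun i => abs_apply_le_enorm v i

lemma enorm_neg (v : Vec d) : enorm (-v) = enorm v := by
  simp [enorm]

lemma enorm_le_ang (v : Vec d) : enorm v ≤ ang v :=
  le_add_of_nonneg_right zero_le_two

lemma two_le_ang (v : Vec d) : 2 ≤ ang v :=
  le_add_of_nonneg_left (Real.sqrt_nonneg _)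

lemma latticePt_zero : latticePt d A 0 = 0 := by
  ext i
  simp [latticePt]

lemma latticePt_add (z w : Fin d → ℤ) :
    latticePt d A (z + w) = latticePt d A z + latticePt d A w := by
  ext i
  simp [latticePt, mul_add, Finset.sum_add_distrib]

lemma latticePt_neg (z : Fin d → ℤ) : latticePt d A (-z) = -latticePt d A z := by
  ext i
  simp [latticePt]

lemma latticePt_sum {ι : Type*} (S : Finset ι) (z : ι → Fin d → ℤ) :
    latticePt d A (∑ m ∈ S, z m) = ∑ m ∈ S, latticePt d A (z m) := by
  ext i
  simp only [latticePt, Finset.sum_apply, Int.cast_sum, Finset.mul_sum]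
  exact Finset.sum_comm

lemma latticePt_injective (hA : IsUnit A.det) : Function.Injective (latticePt d A) := by
  intro z w h
  have := Matrix.mulVec_injective_iff_isUnit.mpr ((Matrix.isUnit_iff_isUnit_det A).mpr hA) h
  ext j
  exact_mod_cast congrFun this j

lemma summable_norm_latticePt_rpow (hA : IsUnit A.det) {t : ℝ} (ht : d < t) :
    Summable fun z : Fin d → ℤ => ‖latticePt d A z‖ ^ (-t) := by
  let b := (Pi.basisFun ℝ (Fin d)).map (A.toLinearEquiv' (A.invertibleOfIsUnitDet hA))
  have hb : ∀ j i, b j i = A i j := fun j i => by simp [b, Matrix.toLinearEquiv']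
  let L := Submodule.span ℤ (Set.range b)
  have hrank : Module.finrank ℤ L = d := by
    simpa using finrank_span_eq_card (b.linearIndependent.restrict_scalars' ℤ)
  have hmem : ∀ z, latticePt d A z ∈ L := fun z => by
    have : latticePt d A z = ∑ j, z j • b j := by
      ext i
      simp [latticePt, hb, mul_comm]
    rw [this]
    exact Submodule.sum_mem _ fun j _ => Submodule.smul_mem L _ (Submodule.subset_span ⟨j, rfl⟩)
  refine (ZLattice.summable_norm_rpow L (-t) (by rw [hrank]; linarith)).comp_injective
    (i := fun z => (⟨latticePt d A z, hmem z⟩ : L)) fun z w h => ?_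
  exact latticePt_injective hA (congrArg Subtype.val h)

lemma summable_ang_latticePt_rpow (hA : IsUnit A.det) {t : ℝ} (ht : d < t) :
    Summable fun z : Fin d → ℤ => ang (latticePt d A z) ^ (-t) := by
  have ht0 : 0 < t := lt_of_le_of_lt (Nat.cast_nonneg d) ht
  refine (summable_norm_latticePt_rpow hA ht).of_norm_bounded_eventually ?_
  have hfin : {z : Fin d → ℤ | latticePt d A z = 0}.Finite :=
    (Set.subsingleton_of_forall_eq 0 fun z hz =>
      latticePt_injective hA (by rw [hz, latticePt_zero])).finite
  filter_upwards [hfin.compl_mem_cofinite] with z hz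
  have hpos : 0 < ‖latticePt d A z‖ := norm_pos_iff.mpr hz
  rw [Real.norm_of_nonneg (Real.rpow_nonneg (by linarith [two_le_ang (latticePt d A z)]) _)]
  exact Real.rpow_le_rpow_of_nonpos hpos ((norm_le_enorm _).trans (enorm_le_ang _)) (by linarith)

lemma summable_moment_of_abs_le (hA : IsUnit A.det) {f : Vec d → ℝ} {c : ℝ} (hc : 0 < c)
    {p α : ℕ} (hf : ∀ z : Fin d → ℤ, |f (latticePt d A z)| ≤
      c * ang (latticePt d A z) ^ (-(d : ℝ) - p) * Real.log (ang (latticePt d A z)) ^ α)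
    {j : ℕ} (hj : j < p) (js : Fin j → Fin d) :
    Summable fun z : Fin d → ℤ => f (latticePt d A z) * ∏ m, latticePt d A z (js m) := by
  refine Summable.of_norm_bounded
    ((summable_ang_latticePt_rpow hA (t := d + 1 / 2) (by linarith)).mul_left (c * (2 * α) ^ α))
    fun z => ?_
  set x := latticePt d A z
  have hx : 2 ≤ ang x := two_le_ang x
  have hx0 : 0 < ang x := by linarith
  have hprod : |∏ m, x (js m)| ≤ ang x ^ (j : ℝ) := by
    rw [Finset.abs_prod, Real.rpow_natCast]
    refine (Finset.prod_le_prod (fun _ _ => abs_nonneg _) fun m _ =>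
      (abs_apply_le_enorm x (js m)).trans (enorm_le_ang x)).trans_eq ?_
    rw [Finset.prod_const, Finset.card_univ, Fintype.card_fin]
  have hexp : -(d : ℝ) - p + 1 / 2 + j ≤ -(d + 1 / 2) := by
    have : (j : ℝ) + 1 ≤ p := by exact_mod_cast hj
    linarith
  calc ‖f x * ∏ m, x (js m)‖
      ≤ c * ang x ^ (-(d : ℝ) - p) * ((2 * α) ^ α * ang x ^ (1 / 2 : ℝ)) * ang x ^ (j : ℝ) := by
        rw [Real.norm_eq_abs, abs_mul]
        gcongr
        exact (hf z).trans (by gcongr; exact log_pow_le_mul_rpow_half α (by linarith))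
    _ = c * (2 * α) ^ α * ang x ^ (-(d : ℝ) - p + 1 / 2 + j) := by
        rw [Real.rpow_add hx0, Real.rpow_add hx0]
        ring
    _ ≤ c * (2 * α) ^ α * ang x ^ (-(d + 1 / 2 : ℝ)) := by
        gcongr
        linarith

end Lattice

abbrev MultipoleCoeffs (d p N : ℕ) : Type := (i : Fin p) → Fin N → (Fin i → Fin d) → ℝ

section Operator

variable {d N : ℕ} (R : Finset (Vec d)) (C : Vec d → Vec d → Fin N → Fin N → ℝ)

lemma mulV_eq_mulVec (M : Fin N → Fin N → ℝ) (v : Vec N) :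
    mulV M v = Matrix.mulVec (Matrix.of M) v := rfl

def hopLinearMap : (Vec d → Vec N) →ₗ[ℝ] (Vec d → Vec N) where
  toFun := Hop d N R C
  map_add' f g := by
    ext ℓ : 1
    simp only [Hop, D1, mulV_eq_mulVec, Pi.add_apply, add_sub_add_comm, Matrix.mulVec_add,
      ← Finset.sum_add_distrib]
  map_smul' r f := by
    ext ℓ : 1
    simp only [Hop, D1, Pi.smul_apply, ← smul_sub, mulV_eq_mulVec, Matrix.mulVec_smul,
      ← Finset.smul_sum, RingHom.id_apply]

lemma hopLinearMap_apply (f : Vec d → Vec N) : hopLinearMap R C f = Hop d N R C f := rfl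

lemma Hop_comp_add_right (f : Vec d → Vec N) (y : Vec d) :
    Hop d N R C (fun x => f (x + y)) = fun x => Hop d N R C f (x + y) := by
  ext x : 1
  simp only [Hop, D1, add_right_comm, sub_add_eq_add_sub]

lemma Hop_Dmulti {n : ℕ} (ρs : Fin n → Vec d) (f : Vec d → Vec N) :
    Hop d N R C (Dmulti ρs f) = Dmulti ρs (Hop d N R C f) := by
  have hD : ∀ g : Vec d → Vec N,
      Dmulti ρs g =
        ∑ S : Finset (Fin n), (-1 : ℝ) ^ (n - S.card) • fun x => g (x + ∑ i ∈ S, ρs i) :=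
    fun g => by ext x : 1; simp [Dmulti]
  rw [hD, hD, ← hopLinearMap_apply, map_sum]
  simp only [map_smul, hopLinearMap_apply, Hop_comp_add_right]

lemma Hop_multipole (s : Fin d → Vec d) (i : ℕ) (b : (Fin i → Fin d) → ℝ)
    (f : Vec d → Vec N) :
    Hop d N R C (multipole d N s i b f) = multipole d N s i b (Hop d N R C f) := by
  have hM : ∀ g : Vec d → Vec N,
      multipole d N s i b g = ∑ σv : Fin i → Fin d, b σv • Dmulti (fun m => s (σv m)) g :=
    fun g => by ext x : 1; simp [multipole]
  rw [hM, hM, ← hopLinearMap_apply, map_sum]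
  simp only [map_smul, hopLinearMap_apply, Hop_Dmulti]

lemma Hop_sum_multipole {p : ℕ} (s : Fin d → Vec d) (b : MultipoleCoeffs d p N)
    (f : Fin N → Vec d → Vec N) :
    Hop d N R C (fun ℓ => ∑ i : Fin p, ∑ k : Fin N, multipole d N s i (b i k) (f k) ℓ) =
      fun ℓ => ∑ i : Fin p, ∑ k : Fin N,
        multipole d N s i (b i k) (Hop d N R C (f k)) ℓ := by
  have hF : ∀ g : Fin N → Vec d → Vec N,
      (fun ℓ => ∑ i : Fin p, ∑ k : Fin N, multipole d N s i (b i k) (g k) ℓ) =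
        ∑ i : Fin p, ∑ k : Fin N, multipole d N s i (b i k) (g k) :=
    fun g => by ext ℓ : 1; simp [Finset.sum_apply]
  rw [hF, hF, ← hopLinearMap_apply]
  simp only [map_sum, hopLinearMap_apply, Hop_multipole]

end Operator

section Combinatorics

lemma sum_superset_neg_one_pow {R : Type*} [Ring R] {n : ℕ} (F : Finset (Fin n)) :
    ∑ S : Finset (Fin n), (if F ⊆ S then (-1 : R) ^ (n - S.card) else 0) =
      if F = Finset.univ then 1 else 0 := by
  rw [Fintype.sum_bijective compl compl_involutive.bijective _
    (fun T => if T ⊆ Fᶜ then (-1 : R) ^ T.card else 0) fun S => by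
      simp only [Finset.compl_subset_compl, Finset.card_compl, Fintype.card_fin],
    ← Finset.sum_filter, Finset.filter_subset_univ]
  have := congrArg (Int.cast : ℤ → R) (Finset.sum_powerset_neg_one_pow_card (x := Fᶜ))
  push_cast at this
  simp_rw [this, Finset.compl_eq_empty_iff]

lemma sum_neg_one_pow_mul_prod_sum {R : Type*} [CommRing R] {j n : ℕ}
    (c : Fin j → Fin n → R) :
    ∑ S : Finset (Fin n), (-1 : R) ^ (n - S.card) * ∏ m, ∑ i ∈ S, c m i =
      ∑ g : Fin j → Fin n, if Function.Surjective g then ∏ m, c m (g m) else 0 := by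
  have hprod : ∀ S : Finset (Fin n), ∏ m, ∑ i ∈ S, c m i =
      ∑ g : Fin j → Fin n, if Finset.univ.image g ⊆ S then ∏ m, c m (g m) else 0 := by
    intro S
    rw [Finset.prod_univ_sum, ← Finset.sum_filter]
    congr 1
    ext g
    simp [Fintype.mem_piFinset, Finset.image_subset_iff]
  simp_rw [hprod, Finset.mul_sum, mul_ite, mul_zero]
  rw [Finset.sum_comm]
  refine Finset.sum_congr rfl fun g _ => ?_
  have himage : Finset.univ.image g = Finset.univ ↔ Function.Surjective g := by
    simp [Finset.eq_univ_iff_forall, Function.Surjective]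
  simp_rw [← ite_zero_mul, ← Finset.sum_mul, sum_superset_neg_one_pow, himage, ite_zero_mul,
    one_mul]

lemma sum_surjective_eq_sum_perm {M : Type*} [AddCommMonoid M] {n : ℕ}
    (f : (Fin n → Fin n) → M) :
    ∑ g : Fin n → Fin n, (if Function.Surjective g then f g else 0) =
      ∑ π : Equiv.Perm (Fin n), f π := by
  rw [← Finset.sum_filter]
  refine (Finset.sum_bij (fun (π : Equiv.Perm (Fin n)) _ => ⇑π)
    (fun π _ => by simp [π.surjective]) (fun _ _ _ _ h => Equiv.coe_fn_injective h)
    (fun g hg => ?_) fun _ _ => rfl).symm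
  have hg : Function.Surjective g := (Finset.mem_filter.mp hg).2
  exact ⟨.ofBijective g ⟨Finite.injective_iff_surjective.mpr hg, hg⟩, Finset.mem_univ _, rfl⟩

end Combinatorics

section KroneckerPower

variable {ι R : Type*} [CommSemiring R]

def kronPow (n : ℕ) (M : Matrix ι ι R) : Matrix (Fin n → ι) (Fin n → ι) R :=
  Matrix.of fun js σv => ∏ m, M (js m) (σv m)

lemma kronPow_mul [Fintype ι] (n : ℕ) (M P : Matrix ι ι R) :
    kronPow n M * kronPow n P = kronPow n (M * P) := by
  ext js τ
  simp only [kronPow, Matrix.mul_apply, Matrix.of_apply, ← Finset.prod_mul_distrib]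
  rw [Finset.prod_univ_sum, Fintype.piFinset_univ]

lemma kronPow_one [DecidableEq ι] (n : ℕ) : kronPow n (1 : Matrix ι ι R) = 1 := by
  ext js τ
  simp [kronPow, Matrix.one_apply, Finset.prod_boole, funext_iff]

lemma kronPow_mulVec_injective [Fintype ι] [DecidableEq ι] {K : Type*} [Field K] {n : ℕ}
    {M : Matrix ι ι K} (hM : IsUnit M.det) : Function.Injective (kronPow n M).mulVec := by
  intro x y h
  simpa [Matrix.mulVec_mulVec, kronPow_mul, Matrix.nonsing_inv_mul _ hM, kronPow_one] using
    congrArg (kronPow n M⁻¹).mulVec h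

end KroneckerPower

section Monomials

variable {d : ℕ}

lemma Dmulti_prod_neg_apply_zero {j n : ℕ} (ρs : Fin n → Vec d) (js : Fin j → Fin d) :
    Dmulti ρs (fun x => ∏ m, -x (js m)) 0 =
      ∑ g : Fin j → Fin n, if Function.Surjective g then ∏ m, -ρs (g m) (js m) else 0 := by
  rw [← sum_neg_one_pow_mul_prod_sum fun m i => -ρs i (js m)]
  simp [Dmulti, Finset.sum_apply, ← Finset.sum_neg_distrib]

lemma Dmulti_prod_neg_apply_zero_of_lt {j n : ℕ} (ρs : Fin n → Vec d) (js : Fin j → Fin d)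
    (h : j < n) : Dmulti ρs (fun x => ∏ m, -x (js m)) 0 = 0 := by
  rw [Dmulti_prod_neg_apply_zero]
  refine Finset.sum_eq_zero fun g _ => if_neg fun hg => ?_
  have := Fintype.card_le_of_surjective g hg
  simp only [Fintype.card_fin] at this
  omega

lemma Dmulti_prod_neg_apply_zero_self {n : ℕ} (ρs : Fin n → Vec d) (js : Fin n → Fin d) :
    Dmulti ρs (fun x => ∏ m, -x (js m)) 0 =
      (-1) ^ n * ∑ π : Equiv.Perm (Fin n), ∏ m, ρs (π m) (js m) := by
  rw [Dmulti_prod_neg_apply_zero, sum_surjective_eq_sum_perm, Finset.mul_sum]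
  simp [Finset.prod_neg]

lemma sum_mul_Dmulti_prod_neg_apply_zero_self {n : ℕ} (s : Fin d → Vec d)
    {b : (Fin n → Fin d) → ℝ} (hb : SymArr b) (js : Fin n → Fin d) :
    ∑ σv : Fin n → Fin d, b σv * Dmulti (fun m => s (σv m)) (fun x => ∏ m, -x (js m)) 0 =
      (-1) ^ n * n.factorial * (kronPow n (Matrix.of s).transpose).mulVec b js := by
  have hperm : ∀ π : Equiv.Perm (Fin n),
      ∑ σv : Fin n → Fin d, b σv * ∏ m, s (σv (π m)) (js m) =
        (kronPow n (Matrix.of s).transpose).mulVec b js := by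
    intro π
    rw [← (Equiv.arrowCongr π (Equiv.refl (Fin d))).sum_comp]
    refine Finset.sum_congr rfl fun σv _ => ?_
    rw [show Equiv.arrowCongr π (Equiv.refl (Fin d)) σv = σv ∘ ⇑π.symm from rfl, hb]
    simp [kronPow, mul_comm]
  simp_rw [Dmulti_prod_neg_apply_zero_self, Finset.mul_sum, mul_left_comm (b _)]
  rw [Finset.sum_comm]
  simp_rw [← Finset.mul_sum, hperm]
  simp [mul_assoc, Fintype.card_perm]

end Monomials

section MomentSystem

variable {d : ℕ} (s : Fin d → Vec d) (p N : ℕ)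

/-- The moments `∑_ℓ H[v_b](ℓ)_a ℓ^{⊗j}` of a multipole field as a linear map of its
coefficients: the moment of `b : D_𝒮^i δ_k` is the `i`-fold difference of `x ↦ (-x)^{⊗j}` at `0`. -/
def multipoleMoment : MultipoleCoeffs d p N →ₗ[ℝ] MultipoleCoeffs d p N where
  toFun b j a js := ∑ i : Fin p, ∑ σv : Fin i → Fin d,
    b i a σv * Dmulti (fun m => s (σv m)) (fun x => ∏ m, -x (js m)) 0
  map_add' b b' := by
    ext j a js
    simp only [Pi.add_apply, add_mul, Finset.sum_add_distrib]
  map_smul' r b := by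
    ext j a js
    simp only [Pi.smul_apply, smul_eq_mul, RingHom.id_apply, mul_assoc, Finset.mul_sum]

def symmetricFamilies : Submodule ℝ ((i : Fin p) → Fin N → (Fin i → Fin d) → ℝ) where
  carrier := {b | ∀ i k, SymArr (b i k)}
  add_mem' hb hb' i k π σv := by simp [hb i k π σv, hb' i k π σv]
  zero_mem' i k π σv := rfl
  smul_mem' r b hb i k π σv := by simp [hb i k π σv]

variable {s p N}

lemma multipoleMoment_apply (b : MultipoleCoeffs d p N) (j : Fin p) (a : Fin N)
    (js : Fin j → Fin d) :
    multipoleMoment s p N b j a js = ∑ i : Fin p, ∑ σv : Fin i → Fin d,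
      b i a σv * Dmulti (fun m => s (σv m)) (fun x => ∏ m, -x (js m)) 0 := rfl

lemma mem_symmetricFamilies {b : MultipoleCoeffs d p N} :
    b ∈ symmetricFamilies p N ↔ ∀ i k, SymArr (b i k) := Iff.rfl

lemma multipoleMoment_mem_symmetricFamilies (b : MultipoleCoeffs d p N) :
    multipoleMoment s p N b ∈ symmetricFamilies p N := fun j a π js => by
  have hπ : (fun x : Vec d => ∏ m, -x ((js ∘ π) m)) = fun x => ∏ m, -x (js m) :=
    funext fun x => Equiv.prod_comp π fun m => -x (js m)
  simp only [multipoleMoment_apply, hπ]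

lemma eq_zero_of_multipoleMoment_eq_zero (hs : LinearIndependent ℝ s)
    {b : MultipoleCoeffs d p N} (hb : b ∈ symmetricFamilies p N)
    (h0 : multipoleMoment s p N b = 0) : b = 0 := by
  have hS : IsUnit (Matrix.of s).transpose.det := by
    rw [Matrix.det_transpose, ← Matrix.isUnit_iff_isUnit_det]
    exact Matrix.linearIndependent_rows_iff_isUnit.mp hs
  funext j
  induction j using WellFoundedLT.induction with
  | _ j ih =>
    funext a
    refine kronPow_mulVec_injective (n := j) hS (funext fun js => ?_)
    have hj := congrFun (congrFun (congrFun h0 j) a) js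
    simp only [multipoleMoment_apply, Pi.zero_apply] at hj
    rw [Fintype.sum_eq_single j fun i hij => ?_, sum_mul_Dmulti_prod_neg_apply_zero_self s
      (hb j a) js] at hj
    · simpa [Nat.factorial_ne_zero] using hj
    rcases lt_or_gt_of_ne hij with hlt | hgt
    · simp [ih i hlt]
    · simp [Dmulti_prod_neg_apply_zero_of_lt _ _ hgt]

lemma existsUnique_multipoleMoment_eq (hs : LinearIndependent ℝ s)
    {T : MultipoleCoeffs d p N} (hT : T ∈ symmetricFamilies p N) :
    ∃! b, b ∈ symmetricFamilies p N ∧ multipoleMoment s p N b = T := by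
  let f := (multipoleMoment s p N).restrict fun b (_ : b ∈ symmetricFamilies p N) =>
    multipoleMoment_mem_symmetricFamilies b
  have hf : Function.Injective f := by
    refine (injective_iff_map_eq_zero f).mpr fun b hb => Subtype.ext ?_
    exact eq_zero_of_multipoleMoment_eq_zero hs b.2 (congrArg Subtype.val hb)
  obtain ⟨b, hb⟩ := LinearMap.injective_iff_surjective.mp hf ⟨T, hT⟩
  refine ⟨b, ⟨b.2, congrArg Subtype.val hb⟩, fun b' ⟨hb', h⟩ => ?_⟩
  have : f ⟨b', hb'⟩ = f b := Subtype.ext (h.trans (congrArg Subtype.val hb).symm)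
  exact congrArg Subtype.val (hf this)

end MomentSystem

section LatticeDelta

variable {d N : ℕ} {A : Matrix (Fin d) (Fin d) ℝ}

lemma hasSum_ite_latticePt_add_eq_zero_mul (hA : IsUnit A.det) (w : Fin d → ℤ) (c : ℝ)
    (F : Vec d → ℝ) :
    HasSum (fun z => (if latticePt d A (z + w) = 0 then c else 0) * F (latticePt d A z))
      (c * F (-latticePt d A w)) := by
  have h : ∀ z, latticePt d A (z + w) = 0 ↔ z = -w := fun z => by
    rw [← latticePt_zero, (latticePt_injective hA).eq_iff, add_eq_zero_iff_eq_neg]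
  convert hasSum_single (-w) fun z hz => ?_ using 1
  · simp [latticePt_neg, latticePt_zero]
  · simp [h, hz]

lemma hasSum_Dmulti_apply_mul (hA : IsUnit A.det) {g : Vec d → Vec N} {k : Fin N}
    (hg : ∀ z, g (latticePt d A z) = if latticePt d A z = 0 then Pi.single k 1 else 0)
    {n : ℕ} (ws : Fin n → Fin d → ℤ) (a : Fin N) (F : Vec d → ℝ) :
    HasSum (fun z => Dmulti (fun m => latticePt d A (ws m)) g (latticePt d A z) a *
        F (latticePt d A z))
      ((Pi.single k 1 : Vec N) a * Dmulti (fun m => latticePt d A (ws m)) (fun x => F (-x)) 0) := by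
  have hS : ∀ (S : Finset (Fin n)) z, latticePt d A z + ∑ m ∈ S, latticePt d A (ws m) =
      latticePt d A (z + ∑ m ∈ S, ws m) := by simp [latticePt_add, latticePt_sum]
  simp only [Dmulti, Finset.sum_apply, Pi.smul_apply, smul_eq_mul, Finset.sum_mul, Finset.mul_sum,
    zero_add, hS, hg]
  refine hasSum_sum fun S _ => ?_
  convert hasSum_ite_latticePt_add_eq_zero_mul hA (∑ m ∈ S, ws m)
    ((-1) ^ (n - S.card) * (Pi.single k 1 : Vec N) a) F using 1
  · ext z
    split_ifs <;> simp [mul_assoc]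
  · rw [latticePt_sum]
    ring

variable {p : ℕ}

lemma hasSum_sum_multipole_apply_mul (hA : IsUnit A.det) (ws : Fin d → Fin d → ℤ)
    {g : Fin N → Vec d → Vec N}
    (hg : ∀ k z, g k (latticePt d A z) = if latticePt d A z = 0 then Pi.single k 1 else 0)
    (b : MultipoleCoeffs d p N) (a : Fin N) (F : Vec d → ℝ) :
    HasSum (fun z => (∑ i : Fin p, ∑ k : Fin N,
        multipole d N (fun i => latticePt d A (ws i)) i (b i k) (g k) (latticePt d A z)) a *
          F (latticePt d A z))
      (∑ i : Fin p, ∑ σv : Fin i → Fin d,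
        b i a σv * Dmulti (fun m => latticePt d A (ws (σv m))) (fun x => F (-x)) 0) := by
  have hsum : HasSum
      (fun z => ∑ i : Fin p, ∑ k : Fin N, ∑ σv : Fin i → Fin d, b i k σv *
        (Dmulti (fun m => latticePt d A (ws (σv m))) (g k) (latticePt d A z) a *
          F (latticePt d A z)))
      (∑ i : Fin p, ∑ k : Fin N, ∑ σv : Fin i → Fin d, b i k σv * ((Pi.single k 1 : Vec N) a *
        Dmulti (fun m => latticePt d A (ws (σv m))) (fun x => F (-x)) 0)) :=
    hasSum_sum fun i _ => hasSum_sum fun k _ => hasSum_sum fun σv _ =>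
      (hasSum_Dmulti_apply_mul hA (hg k) (fun m => ws (σv m)) a F).mul_left (b i k σv)
  convert hsum using 1
  · ext z
    simp [multipole, Finset.sum_apply, Finset.sum_mul, mul_assoc]
  · refine Finset.sum_congr rfl fun i _ => ?_
    rw [Finset.sum_comm]
    simp [Pi.single_apply]

lemma exists_forall_sum_multipole_eq_zero (ws : Fin d → Fin d → ℤ)
    {g : Fin N → Vec d → Vec N} (hg : ∀ k z, latticePt d A z ≠ 0 → g k (latticePt d A z) = 0)
    (b : MultipoleCoeffs d p N) :
    ∃ rad : ℝ, ∀ z, rad ≤ enorm (latticePt d A z) → ∑ i : Fin p, ∑ k : Fin N,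
      multipole d N (fun i => latticePt d A (ws i)) i (b i k) (g k) (latticePt d A z) = 0 := by
  obtain ⟨M, hM⟩ := (Set.finite_range
    fun x : (Σ i : Fin p, (Fin i → Fin d) × Finset (Fin i)) =>
      enorm (latticePt d A (∑ m ∈ x.2.2, ws (x.2.1 m)))).bddAbove
  refine ⟨M + 1, fun z hz => ?_⟩
  simp only [multipole, Dmulti]
  refine Finset.sum_eq_zero fun i _ => Finset.sum_eq_zero fun k _ => Finset.sum_eq_zero
    fun σv _ => smul_eq_zero_of_right _ (Finset.sum_eq_zero fun S _ => smul_eq_zero_of_right _ ?_)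
  rw [← latticePt_sum, ← latticePt_add]
  refine hg k _ fun h0 => ?_
  rw [latticePt_add, add_eq_zero_iff_eq_neg] at h0
  have := hM ⟨⟨i, σv, S⟩, rfl⟩
  rw [h0, enorm_neg] at hz
  linarith

lemma hasSum_moment_sum_multipole (hA : IsUnit A.det) (ws : Fin d → Fin d → ℤ)
    {g : Fin N → Vec d → Vec N}
    (hg : ∀ k z, g k (latticePt d A z) = if latticePt d A z = 0 then Pi.single k 1 else 0)
    (b : MultipoleCoeffs d p N) (j : Fin p) (a : Fin N) (js : Fin j → Fin d) :
    HasSum (fun z => (∑ i : Fin p, ∑ k : Fin N,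
        multipole d N (fun i => latticePt d A (ws i)) i (b i k) (g k) (latticePt d A z)) a *
          ∏ m, latticePt d A z (js m))
      (multipoleMoment (fun i => latticePt d A (ws i)) p N b j a js) := by
  simpa only [multipoleMoment_apply, Pi.neg_apply] using
    hasSum_sum_multipole_apply_mul hA ws hg b a fun x => ∏ m, x (js m)

end LatticeDelta

theorem moment_matching_multipole_general
    (d N : ℕ)
    (A : Matrix (Fin d) (Fin d) ℝ) (hA : IsUnit A.det)
    (R : Finset (Vec d))
    (C : Vec d → Vec d → Fin N → Fin N → ℝ)
    (G : Vec d → Fin N → Fin N → ℝ) (hG : IsLatticeGreen d N A R C G)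
    (s : Fin d → Vec d) (hslat : ∀ i, s i ∈ Lattice d A)
    (hsind : LinearIndependent ℝ s)
    (u : Vec d → Vec N)
    (p : ℕ) (α : ℕ) (c : ℝ) (hc : 0 < c)
    (hbound : ∀ z : Fin d → ℤ,
      enorm (Hop d N R C u (latticePt d A z)) ≤
        c * ang (latticePt d A z) ^ (-(d : ℝ) - p) *
          Real.log (ang (latticePt d A z)) ^ α) :
    -- the linearized force of any multipole field has compact support …
    (∀ b : (i : Fin p) → Fin N → (Fin (i : ℕ) → Fin d) → ℝ, ∃ rad : ℝ,
      ∀ z : Fin d → ℤ, rad ≤ enorm (latticePt d A z) →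
        Hop d N R C
          (fun ℓ => ∑ i : Fin p, ∑ k : Fin N,
            multipole d N s (i : ℕ) (b i k) (col G k) ℓ)
          (latticePt d A z) = 0) ∧
    -- … and there are unique symmetric arrays matching all moments of `u`
    (∃! b : (i : Fin p) → Fin N → (Fin (i : ℕ) → Fin d) → ℝ,
      (∀ (i : Fin p) (k : Fin N), SymArr (b i k)) ∧
      (∀ j : ℕ, j < p → ∀ (a : Fin N) (js : Fin j → Fin d),
        ∃ mval : ℝ,
          HasSum (fun z : Fin d → ℤ =>
            Hop d N R C u (latticePt d A z) a * ∏ m, latticePt d A z (js m)) mval ∧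
          HasSum (fun z : Fin d → ℤ =>
            Hop d N R C
              (fun ℓ => ∑ i : Fin p, ∑ k : Fin N,
                multipole d N s (i : ℕ) (b i k) (col G k) ℓ)
              (latticePt d A z) a * ∏ m, latticePt d A z (js m)) mval)) := by
  obtain ⟨ws, rfl⟩ : ∃ ws : Fin d → Fin d → ℤ, s = fun i => latticePt d A (ws i) :=
    ⟨fun i => (hslat i).choose, funext fun i => (hslat i).choose_spec.symm⟩
  simp only [Hop_sum_multipole]
  let Iu : MultipoleCoeffs d p N := fun j a js =>
    ∑' z, Hop d N R C u (latticePt d A z) a * ∏ m, latticePt d A z (js m)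
  have hIu_sum : ∀ j a js, HasSum (fun z => Hop d N R C u (latticePt d A z) a *
      ∏ m, latticePt d A z (js m)) (Iu j a js) := fun j a js =>
    (summable_moment_of_abs_le (f := fun ℓ => Hop d N R C u ℓ a) hA hc
      (fun z => (abs_apply_le_enorm _ a).trans (hbound z)) j.2 js).hasSum
  have hIu : Iu ∈ symmetricFamilies p N := mem_symmetricFamilies.mpr fun j a π js =>
    tsum_congr fun z => by rw [← Equiv.prod_comp π fun m => latticePt d A z (js m)]; rfl
  refine ⟨fun b => exists_forall_sum_multipole_eq_zero ws
    (fun k z hz => by rw [hG.1 k z, if_neg hz]) b, ?_⟩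
  simp only [← mem_symmetricFamilies]
  refine (existsUnique_congr fun b => and_congr_right fun _ => ⟨?_, ?_⟩).mp
    (existsUnique_multipoleMoment_eq hsind hIu)
  · rintro h j hj a js
    exact ⟨_, hIu_sum ⟨j, hj⟩ a js, h ▸ hasSum_moment_sum_multipole hA ws hG.1 b ⟨j, hj⟩ a js⟩
  · intro h
    ext j a js
    obtain ⟨m, hum, hvm⟩ := h j j.2 a js
    exact ((hasSum_moment_sum_multipole hA ws hG.1 b j a js).unique hvm).trans
      (hum.unique (hIu_sum j a js))

/-- Lemma: moment matching by multipole fields. -/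
theorem moment_matching_multipole
    (d N : ℕ) (hd : 2 ≤ d)
    (A : Matrix (Fin d) (Fin d) ℝ) (hA : IsUnit A.det)
    (R : Finset (Vec d)) (hR0 : (0 : Vec d) ∉ R)
    (hRlat : ∀ ρ ∈ R, ρ ∈ Lattice d A)
    (hRsym : ∀ ρ ∈ R, -ρ ∈ R)
    (hRspan : ∀ x ∈ Lattice d A, ∃ c : Vec d → ℤ, x = ∑ ρ ∈ R, (c ρ : ℝ) • ρ)
    (C : Vec d → Vec d → Fin N → Fin N → ℝ)
    (hCsym : ∀ σ ρ i j, C σ ρ i j = C ρ σ j i)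
    (hCpt : ∀ σ ρ, C σ ρ = C (-σ) (-ρ))
    (hstab : IsStable d N A R C)
    (G : Vec d → Fin N → Fin N → ℝ) (hG : IsLatticeGreen d N A R C G)
    (s : Fin d → Vec d) (hslat : ∀ i, s i ∈ Lattice d A)
    (hsind : LinearIndependent ℝ s)
    (hsspan : ∀ x ∈ Lattice d A, ∃ z : Fin d → ℤ, x = ∑ i, (z i : ℝ) • s i)
    (u : Vec d → Vec N) (hu : InH1 A R u)
    (p : ℕ) (hp : 1 ≤ p) (α : ℕ) (c : ℝ) (hc : 0 < c)
    (hbound : ∀ z : Fin d → ℤ,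
      enorm (Hop d N R C u (latticePt d A z)) ≤
        c * ang (latticePt d A z) ^ (-(d : ℝ) - p) *
          Real.log (ang (latticePt d A z)) ^ α) :
    -- the linearized force of any multipole field has compact support …
    (∀ b : (i : Fin p) → Fin N → (Fin (i : ℕ) → Fin d) → ℝ, ∃ rad : ℝ,
      ∀ z : Fin d → ℤ, rad ≤ enorm (latticePt d A z) →
        Hop d N R C
          (fun ℓ => ∑ i : Fin p, ∑ k : Fin N,
            multipole d N s (i : ℕ) (b i k) (col G k) ℓ)
          (latticePt d A z) = 0) ∧
    -- … and there are unique symmetric arrays matching all moments of `u`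
    (∃! b : (i : Fin p) → Fin N → (Fin (i : ℕ) → Fin d) → ℝ,
      (∀ (i : Fin p) (k : Fin N), SymArr (b i k)) ∧
      (∀ j : ℕ, j < p → ∀ (a : Fin N) (js : Fin j → Fin d),
        ∃ mval : ℝ,
          HasSum (fun z : Fin d → ℤ =>
            Hop d N R C u (latticePt d A z) a * ∏ m, latticePt d A z (js m)) mval ∧
          HasSum (fun z : Fin d → ℤ =>
            Hop d N R C
              (fun ℓ => ∑ i : Fin p, ∑ k : Fin N,
                multipole d N s (i : ℕ) (b i k) (col G k) ℓ)
              (latticePt d A z) a * ∏ m, latticePt d A z (js m)) mval)) :=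
  moment_matching_multipole_general d N A hA R C G hG s hslat hsind u p α c hc hbound

end Defect
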